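/- For all n ≥ 1, (θ_{n+1} - θ_n)/θ_n > (22/25)·ln(p_n)/p_n, where θ_n = ∑_{i=1}^n ln(p_i). -/

import Mathlib

noncomputable def p (n : ℕ) : ℕ := Nat.nth Nat.Prime (n - 1)

noncomputable def θ (n : ℕ) : ℝ := ∑ i ∈ Finset.Icc 1 n, Real.log (p i)

/-!
Since `log p (n + 1) > log p n`, it suffices to show `θ n ≤ (25/22) p n`, and `θ n ≤ ψ (p n)`.
Chebyshev's bound `ψ x ≤ (25/22) x` follows by induction on `x`: the weight
`⌊m⌋ - ⌊m/2⌋ - ⌊m/3⌋ - ⌊m/5⌋ + ⌊m/30⌋` is nonnegative and equals `1` for `1 ≤ m ≤ 5`, so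
`ψ x - ψ (x/6) ≤ E x := T x - T (x/2) - T (x/3) - T (x/5) + T (x/30)` with `T x = log ⌊x⌋!`.
Stirling's bounds give `E x ≤ A x + 4 log x + 2`, where
`A = log 2 / 2 + log 3 / 3 + log 5 / 5 - log 30 / 30 < 0.925`, comfortably below
`(5/6)(25/22) ≈ 0.947`. Below `2048` the bound is checked numerically as `lcm(1, …, n) ≤ 3 ^ n`.
-/

open Finset
open scoped Nat ArithmeticFunction

local notation "ψ" => Chebyshev.psi

theorem log_factorial_eq_sum_vonMangoldt (n : ℕ) :
    Real.log (n ! : ℝ) = ∑ d ∈ Ioc 0 n, Λ d * (n / d : ℕ) := by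
  rw [← ArithmeticFunction.sum_Ioc_mul_zeta_eq_sum, ArithmeticFunction.vonMangoldt_mul_zeta,
    ← prod_Ico_id_eq_factorial, Nat.cast_prod,
    Real.log_prod fun k hk => by have := (mem_Ico.1 hk).1; positivity]
  rfl

theorem log_factorial_div_eq_sum_vonMangoldt (n k : ℕ) :
    Real.log ((n / k)! : ℝ) = ∑ d ∈ Ioc 0 n, Λ d * (n / d / k : ℕ) := by
  simp_rw [log_factorial_eq_sum_vonMangoldt, Nat.div_div_eq_div_mul n _ k, mul_comm _ k,
    ← Nat.div_div_eq_div_mul n k]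
  refine sum_subset (Ioc_subset_Ioc_right (Nat.div_le_self n k)) fun d hd hd' => ?_
  have hlt : n / k < d := by simp only [mem_Ioc] at hd hd'; omega
  simp [Nat.div_eq_of_lt hlt]

def chebyshevWeight (m : ℕ) : ℝ := m - (m / 2 : ℕ) - (m / 3 : ℕ) - (m / 5 : ℕ) + (m / 30 : ℕ)

theorem chebyshevWeight_nonneg (m : ℕ) : 0 ≤ chebyshevWeight m := by
  have h : m / 2 + m / 3 + m / 5 ≤ m + m / 30 := by omega
  have := (Nat.cast_le (α := ℝ)).2 h
  push_cast at this
  unfold chebyshevWeight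
  linarith

theorem chebyshevWeight_eq_one {m : ℕ} (h1 : 1 ≤ m) (h5 : m ≤ 5) : chebyshevWeight m = 1 := by
  have h : m + m / 30 = m / 2 + m / 3 + m / 5 + 1 := by omega
  have := congrArg (Nat.cast (R := ℝ)) h
  push_cast at this
  unfold chebyshevWeight
  linarith

noncomputable def chebyshevE (n : ℕ) : ℝ :=
  Real.log (n ! : ℝ) - Real.log ((n / 2)! : ℝ) - Real.log ((n / 3)! : ℝ) - Real.log ((n / 5)! : ℝ) +
    Real.log ((n / 30)! : ℝ)

theorem chebyshevE_eq_sum (n : ℕ) :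
    chebyshevE n = ∑ d ∈ Ioc 0 n, Λ d * chebyshevWeight (n / d) := by
  have h1 := log_factorial_div_eq_sum_vonMangoldt n 1
  simp only [Nat.div_one] at h1
  simp only [chebyshevE, chebyshevWeight, h1, log_factorial_div_eq_sum_vonMangoldt,
    ← sum_sub_distrib, ← sum_add_distrib]
  exact sum_congr rfl fun d _ => by ring

theorem psi_sub_psi_div_six_le_chebyshevE (n : ℕ) : ψ n - ψ (n / 6 : ℕ) ≤ chebyshevE n := by
  simp only [Chebyshev.psi, Nat.floor_natCast]
  rw [← sum_Ioc_consecutive _ (Nat.zero_le (n / 6)) (Nat.div_le_self n 6), add_sub_cancel_left,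
    chebyshevE_eq_sum]
  calc ∑ d ∈ Ioc (n / 6) n, Λ d = ∑ d ∈ Ioc (n / 6) n, Λ d * chebyshevWeight (n / d) := by
        refine sum_congr rfl fun d hd => ?_
        obtain ⟨hd6, hdn⟩ := mem_Ioc.1 hd
        have h1 : 1 ≤ n / d := Nat.div_pos hdn (by omega)
        have h5 : n / d < 6 := (Nat.div_lt_iff_lt_mul (by omega)).2 (by omega)
        rw [chebyshevWeight_eq_one h1 (by omega), mul_one]
    _ ≤ ∑ d ∈ Ioc 0 n, Λ d * chebyshevWeight (n / d) :=
        sum_le_sum_of_subset_of_nonneg (Ioc_subset_Ioc_left (Nat.zero_le _)) fun _ _ _ =>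
          mul_nonneg ArithmeticFunction.vonMangoldt_nonneg (chebyshevWeight_nonneg _)

theorem self_mul_log_sub_self_le_log_factorial (m : ℕ) :
    m * Real.log m - m ≤ Real.log (m ! : ℝ) := by
  rcases eq_or_ne m 0 with rfl | hm
  · simp
  have := Stirling.le_log_factorial_stirling hm
  have : 0 ≤ Real.log m := Real.log_natCast_nonneg m
  have : 0 ≤ Real.log (2 * Real.pi) := Real.log_nonneg (by linarith [Real.pi_gt_three])
  linarith

theorem log_factorial_le {m : ℕ} (hm : m ≠ 0) :
    Real.log (m ! : ℝ) ≤ m * Real.log m - m + Real.log m / 2 + 1 := by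
  obtain ⟨k, rfl⟩ := Nat.exists_eq_succ_of_ne_zero hm
  have hlog : Real.log (Stirling.stirlingSeq (k + 1)) ≤ Real.log (Stirling.stirlingSeq 1) :=
    Real.log_le_log (Stirling.stirlingSeq'_pos k) (Stirling.stirlingSeq'_antitone (Nat.zero_le k))
  have hm0 : (0 : ℝ) < (k + 1 : ℕ) := by positivity
  have hone : Real.log (Real.exp 1 / √2) = 1 - Real.log 2 / 2 := by
    rw [Real.log_div (by positivity) (by positivity), Real.log_exp, Real.log_sqrt (by norm_num)]
  rw [Stirling.log_stirlingSeq_formula, Stirling.stirlingSeq_one, hone,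
    Real.log_mul (by norm_num) hm0.ne', Real.log_div hm0.ne' (by positivity), Real.log_exp] at hlog
  linarith

-- The tangent line at `b` of the convex function `x ↦ x log x - x` lies below its graph.
theorem mul_log_sub_self_sub_le {a b : ℝ} (ha : 0 < a) (hb : 0 < b) :
    b * Real.log b - b - (a * Real.log a - a) ≤ (b - a) * Real.log b := by
  have h := Real.log_le_sub_one_of_pos (div_pos hb ha)
  rw [Real.log_div hb.ne' ha.ne'] at h
  have : a * (Real.log b - Real.log a) ≤ b - a :=
    calc a * (Real.log b - Real.log a) ≤ a * (b / a - 1) := mul_le_mul_of_nonneg_left h ha.le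
      _ = b - a := by field_simp
  linarith

theorem log_factorial_floor_ge {y : ℝ} (hy : 1 ≤ y) :
    y * Real.log y - y - Real.log y ≤ Real.log (⌊y⌋₊ ! : ℝ) := by
  have hm : (1 : ℝ) ≤ ⌊y⌋₊ := by exact_mod_cast Nat.one_le_floor_iff y |>.2 hy
  have hmy : (⌊y⌋₊ : ℝ) ≤ y := Nat.floor_le (by linarith)
  have hym : y < ⌊y⌋₊ + 1 := Nat.lt_floor_add_one y
  have hconv := mul_log_sub_self_sub_le (a := ⌊y⌋₊) (b := y) (by linarith) (by linarith)
  have hlog : 0 ≤ Real.log y := Real.log_nonneg hy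
  have : (y - ⌊y⌋₊) * Real.log y ≤ Real.log y := by nlinarith
  linarith [self_mul_log_sub_self_le_log_factorial ⌊y⌋₊]

theorem log_factorial_floor_le {y : ℝ} (hy : 1 ≤ y) :
    Real.log (⌊y⌋₊ ! : ℝ) ≤ y * Real.log y - y + Real.log y / 2 + 1 := by
  have hm1 : 1 ≤ ⌊y⌋₊ := Nat.one_le_floor_iff y |>.2 hy
  have hm : (1 : ℝ) ≤ ⌊y⌋₊ := by exact_mod_cast hm1
  have hmy : (⌊y⌋₊ : ℝ) ≤ y := Nat.floor_le (by linarith)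
  have hconv := mul_log_sub_self_sub_le (a := y) (b := ⌊y⌋₊) (by linarith) (by linarith)
  have hlog : 0 ≤ Real.log ⌊y⌋₊ := Real.log_nonneg hm
  have hlog_le : Real.log ⌊y⌋₊ ≤ Real.log y := Real.log_le_log (by linarith) hmy
  have : ((⌊y⌋₊ : ℝ) - y) * Real.log ⌊y⌋₊ ≤ 0 := mul_nonpos_of_nonpos_of_nonneg (by linarith) hlog
  linarith [log_factorial_le (Nat.one_le_iff_ne_zero.1 hm1)]

noncomputable def chebyshevConst : ℝ :=
  Real.log 2 / 2 + Real.log 3 / 3 + Real.log 5 / 5 - Real.log 30 / 30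

theorem chebyshevE_le {n : ℕ} (hn : 30 ≤ n) :
    chebyshevE n ≤ chebyshevConst * n + 4 * Real.log n + 2 := by
  have hn0 : (30 : ℝ) ≤ n := by exact_mod_cast hn
  have hy : ∀ k : ℝ, 0 < k → k ≤ 30 → 1 ≤ (n : ℝ) / k := fun k hk hk30 =>
    (one_le_div hk).2 (by linarith)
  have hlog : ∀ k : ℝ, 0 < k → Real.log ((n : ℝ) / k) = Real.log n - Real.log k := fun k hk =>
    Real.log_div (by positivity) hk.ne'
  have h1 := log_factorial_le (m := n) (by omega)
  have h2 := log_factorial_floor_ge (hy 2 (by norm_num) (by norm_num))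
  have h3 := log_factorial_floor_ge (hy 3 (by norm_num) (by norm_num))
  have h5 := log_factorial_floor_ge (hy 5 (by norm_num) (by norm_num))
  have h30 := log_factorial_floor_le (hy 30 (by norm_num) (by norm_num))
  simp only [hlog _ (by norm_num : (0 : ℝ) < 2), hlog _ (by norm_num : (0 : ℝ) < 3),
    hlog _ (by norm_num : (0 : ℝ) < 5), hlog _ (by norm_num : (0 : ℝ) < 30)] at h2 h3 h5 h30
  rw [chebyshevE, ← Nat.floor_div_eq_div (K := ℝ) n 2, ← Nat.floor_div_eq_div (K := ℝ) n 3,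
    ← Nat.floor_div_eq_div (K := ℝ) n 5, ← Nat.floor_div_eq_div (K := ℝ) n 30, chebyshevConst]
  push_cast at h2 h3 h5 h30 ⊢
  have hlog_nonneg : ∀ k : ℝ, 1 ≤ k → 0 ≤ Real.log k := fun k hk => Real.log_nonneg hk
  linarith [hlog_nonneg 2 (by norm_num), hlog_nonneg 3 (by norm_num), hlog_nonneg 5 (by norm_num),
    hlog_nonneg 30 (by norm_num)]

theorem chebyshevConst_lt : chebyshevConst < 37 / 40 := by
  have h30 : Real.log 30 = Real.log 2 + Real.log 3 + Real.log 5 := by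
    rw [← Real.log_mul (by norm_num) (by norm_num), ← Real.log_mul (by norm_num) (by norm_num)]
    norm_num
  -- `30 * chebyshevConst = log (2 ^ 14 * 3 ^ 9 * 5 ^ 5)`
  have hpow : 9 * Real.log 3 + 5 * Real.log 5 ≤ 26 * Real.log 2 := by
    have := Real.log_le_log (by norm_num) (show (3 : ℝ) ^ 9 * 5 ^ 5 ≤ 2 ^ 26 by norm_num)
    rwa [Real.log_mul (by norm_num) (by norm_num), Real.log_pow, Real.log_pow, Real.log_pow] at this
  rw [chebyshevConst, h30]
  linarith [Real.log_two_lt_d9]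

theorem Nat.lcmUpto_succ (n : ℕ) : Nat.lcmUpto (n + 1) = (Nat.lcmUpto n).lcm (n + 1) := by
  rw [Nat.lcmUpto, Nat.lcmUpto, ← insert_Icc_right_eq_Icc_add_one (by omega), lcm_insert,
    Nat.lcm_comm]
  rfl

def checkLcmUptoLeThreePow : ℕ → ℕ → ℕ → ℕ → Bool
  | 0, _, _, _ => true
  | k + 1, n, L, P => decide (L ≤ P) && checkLcmUptoLeThreePow k (n + 1) (L.lcm (n + 1)) (3 * P)

theorem Nat.lcmUpto_le_three_pow_of_check {k n : ℕ}
    (h : checkLcmUptoLeThreePow k n (Nat.lcmUpto n) (3 ^ n) = true) {m : ℕ} (hnm : n ≤ m)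
    (hmk : m < n + k) : Nat.lcmUpto m ≤ 3 ^ m := by
  induction k generalizing n with
  | zero => omega
  | succ k ih =>
    simp only [checkLcmUptoLeThreePow, Bool.and_eq_true, decide_eq_true_eq] at h
    rcases hnm.eq_or_lt with rfl | hlt
    · exact h.1
    · rw [← Nat.lcmUpto_succ, ← pow_succ'] at h
      exact ih h.2 hlt (by omega)

theorem Nat.lcmUpto_le_three_pow {n : ℕ} (hn : n < 2048) : Nat.lcmUpto n ≤ 3 ^ n := by
  have hcheck : checkLcmUptoLeThreePow 2048 0 1 1 = true := by
    set_option maxRecDepth 10000 in decide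
  exact Nat.lcmUpto_le_three_pow_of_check (by simpa [Nat.lcmUpto] using hcheck) (Nat.zero_le n) hn

theorem log_three_lt : Real.log 3 < 25 / 22 := by
  have he : (2.7 : ℝ) < Real.exp 1 := by linarith [Real.exp_one_gt_d9]
  have hpow : (3 : ℝ) ^ 22 < Real.exp 1 ^ 25 :=
    (by norm_num : (3 : ℝ) ^ 22 < 2.7 ^ 25).trans (pow_lt_pow_left₀ he (by norm_num) (by norm_num))
  have := Real.log_lt_log (by positivity) hpow
  rw [Real.log_pow, Real.log_pow, Real.log_exp] at this
  push_cast at this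
  linarith

theorem psi_natCast_le_of_lt {n : ℕ} (hn : n < 2048) : ψ n ≤ 25 / 22 * n := by
  have hlcm : (0 : ℝ) < Nat.lcmUpto n := by exact_mod_cast Nat.lcmUpto_pos n
  calc ψ n = Real.log (Nat.lcmUpto n) := Chebyshev.psi_eq_log_lcmUpto n
    _ ≤ Real.log ((3 : ℝ) ^ n) := Real.log_le_log hlcm (by exact_mod_cast Nat.lcmUpto_le_three_pow hn)
    _ = n * Real.log 3 := Real.log_pow _ _
    _ ≤ 25 / 22 * n := by nlinarith [log_three_lt, (Nat.cast_nonneg n : (0 : ℝ) ≤ n)]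

theorem four_mul_log_add_two_le {x : ℝ} (hx : 2048 ≤ x) : 4 * Real.log x + 2 ≤ x / 50 := by
  have hsplit : Real.log x = 11 * Real.log 2 + Real.log (x / 2048) := by
    rw [Real.log_div (by positivity) (by norm_num), show (2048 : ℝ) = 2 ^ 11 by norm_num,
      Real.log_pow]
    push_cast
    ring
  have := Real.log_le_sub_one_of_pos (x := x / 2048) (by positivity)
  linarith [Real.log_two_lt_d9]

theorem psi_natCast_le (n : ℕ) : ψ n ≤ 25 / 22 * n := by
  induction n using Nat.strong_induction_on with
  | _ n ih =>
    rcases lt_or_ge n 2048 with hn | hn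
    · exact psi_natCast_le_of_lt hn
    have hx : (2048 : ℝ) ≤ n := by exact_mod_cast hn
    have hrec := psi_sub_psi_div_six_le_chebyshevE n
    have hE := chebyshevE_le (by omega : 30 ≤ n)
    have hconst := mul_le_mul_of_nonneg_right chebyshevConst_lt.le (Nat.cast_nonneg (α := ℝ) n)
    have hih := ih (n / 6) (Nat.div_lt_self (by omega) (by norm_num))
    have hdiv : ((n / 6 : ℕ) : ℝ) ≤ n / 6 := Nat.cast_div_le
    linarith [four_mul_log_add_two_le hx]

theorem p_prime (n : ℕ) : (p n).Prime := Nat.prime_nth_prime (n - 1)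

theorem p_strictMonoOn : StrictMonoOn p (Set.Ici 1) := fun m hm _ _ hmn =>
  Nat.nth_strictMono Nat.infinite_setOfPred_prime (by rw [Set.mem_Ici] at hm; omega)

theorem p_monotone : Monotone p := fun _ _ hmn =>
  (Nat.nth_strictMono Nat.infinite_setOfPred_prime).monotone (by omega)

theorem θ_le_psi_p (n : ℕ) : θ n ≤ ψ (p n) := by
  have hinj : Set.InjOn p ↑(Icc 1 n) :=
    p_strictMonoOn.injOn.mono fun i hi => Set.mem_Ici.2 (mem_Icc.1 (mem_coe.1 hi)).1
  simp only [θ, Chebyshev.psi, Nat.floor_natCast]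
  rw [← sum_image (f := fun q : ℕ => Real.log q) hinj]
  calc ∑ q ∈ (Icc 1 n).image p, Real.log q = ∑ q ∈ (Icc 1 n).image p, Λ q :=
        sum_congr rfl fun q hq => by
          obtain ⟨i, -, rfl⟩ := mem_image.1 hq
          exact (ArithmeticFunction.vonMangoldt_apply_prime (p_prime i)).symm
    _ ≤ ∑ q ∈ Ioc 0 (p n), Λ q := by
        refine sum_le_sum_of_subset_of_nonneg (fun q hq => ?_) fun _ _ _ =>
          ArithmeticFunction.vonMangoldt_nonneg
        obtain ⟨i, hi, rfl⟩ := mem_image.1 hq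
        exact mem_Ioc.2 ⟨(p_prime i).pos, p_monotone (mem_Icc.1 hi).2⟩

theorem θ_succ_sub_θ (n : ℕ) : θ (n + 1) - θ n = Real.log (p (n + 1)) := by
  rw [θ, θ, sum_Icc_succ_top (by omega)]
  ring

theorem θ_pos {n : ℕ} (hn : 1 ≤ n) : 0 < θ n :=
  sum_pos (fun i _ => Real.log_pos (by exact_mod_cast (p_prime i).one_lt)) ⟨1, mem_Icc.2 ⟨le_rfl, hn⟩⟩

theorem stmt12 : ∀ n : ℕ, 1 ≤ n → (θ (n+1) - θ n) / θ n > (22/25) * Real.log (p n) / (p n : ℝ) := by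
  intro n hn
  have hp_pos : (0 : ℝ) < p n := by exact_mod_cast (p_prime n).pos
  have hlog_pos : 0 < Real.log (p n) := Real.log_pos (by exact_mod_cast (p_prime n).one_lt)
  have hθ_le : θ n ≤ 25 / 22 * p n := (θ_le_psi_p n).trans (psi_natCast_le (p n))
  have hlog_lt : Real.log (p n) < Real.log (p (n + 1)) :=
    Real.log_lt_log hp_pos (by exact_mod_cast p_strictMonoOn hn (by simp) n.lt_succ_self)
  rw [θ_succ_sub_θ, gt_iff_lt, div_lt_div_iff₀ hp_pos (θ_pos hn)]
  calc 22 / 25 * Real.log (p n) * θ n ≤ Real.log (p n) * p n := by nlinarith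
    _ < Real.log (p (n + 1)) * p n := mul_lt_mul_of_pos_right hlog_lt hp_pos
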